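/- For all natural numbers d ≥ 1 and p ≥ 1 and all vectors q, k ∈ ℝ^d, the inner product of the symmetric-power embeddings equals the p-th power of the inner product: ⟨spow_p(q), spow_p(k)⟩ = (⟨q, k⟩)^p. -/

import Mathlib

open scoped Classical

/-- hist_k(i): the number of positions j with i_j = k. -/
def hist {p d : ℕ} (i : Fin p → Fin d) (k : Fin d) : ℕ :=
  (Finset.univ.filter (fun j => i j = k)).card

/-- The symmetric power embedding spow_p : ℝ^d → ℝ^{|NDMI^p_d|}, indexed by
non-decreasing multi-indices (monotone functions Fin p → Fin d), with entry
√(p! / ∏_k hist_k(i)!) · ∏_j x_{i_j}. -/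
noncomputable def spow {d : ℕ} (p : ℕ) (x : Fin d → ℝ)
    (i : {f : Fin p → Fin d // Monotone f}) : ℝ :=
  Real.sqrt ((p.factorial : ℝ) / ∏ k, ((hist i.1 k).factorial : ℝ)) * ∏ j, x (i.1 j)

/-!
By the multinomial theorem, `(∑ a, q a * k a) ^ p` is the sum over compositions `c` of `p` into
`d` parts of `multinomial c * ∏ a, (q a * k a) ^ c a`. Sending a non-decreasing multi-index to its
histogram is a bijection onto these compositions, since a sorted tuple is determined by its
multiset of values, and under it the product of the two entries of `spow` is exactly the
corresponding term: the square roots multiply to `p! / ∏ a, (c a)! = multinomial c`.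
-/

open Finset

section hist

variable {p d : ℕ}

lemma hist_eq_count_ofFn (f : Fin p → Fin d) (k : Fin d) :
    hist f k = (List.ofFn f).count k := by
  rw [← Multiset.coe_count, ← Fin.univ_val_map, Multiset.count_map, hist]
  simp only [eq_comm]
  rfl

lemma sum_hist (f : Fin p → Fin d) : ∑ k, hist f k = p := by
  simpa [hist] using (card_eq_sum_card_fiberwise (s := univ) fun j _ => mem_univ (f j)).symm

lemma prod_comp_eq_prod_pow_hist {M : Type*} [CommMonoid M] (x : Fin d → M)
    (f : Fin p → Fin d) :
    ∏ j, x (f j) = ∏ k, x k ^ hist f k := by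
  rw [← prod_fiberwise_of_maps_to fun j _ => mem_univ (f j)]
  refine prod_congr rfl fun k _ => ?_
  rw [prod_congr rfl fun j hj => congrArg x (mem_filter.1 hj).2, prod_const, hist]

lemma Monotone.eq_of_hist_eq {f g : Fin p → Fin d} (hf : Monotone f) (hg : Monotone g)
    (h : hist f = hist g) : f = g := by
  refine List.ofFn_injective (List.Perm.eq_of_sortedLE hf.sortedLE_ofFn hg.sortedLE_ofFn ?_)
  rw [List.perm_iff_count]
  intro k
  rw [← hist_eq_count_ofFn, ← hist_eq_count_ofFn, h]

lemma exists_monotone_hist_eq (c : Fin d → ℕ) (hc : ∑ k, c k = p) :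
    ∃ f : Fin p → Fin d, Monotone f ∧ hist f = c := by
  set L := (∑ k, Multiset.replicate (c k) k).sort
  have hlen : L.length = p := by simp [L, Multiset.card_sum, hc]
  obtain ⟨f, hf⟩ : ∃ f : Fin p → Fin d, List.ofFn f = L :=
    ⟨fun j => L.get (j.cast hlen.symm), by subst hlen; exact List.ofFn_get L⟩
  refine ⟨f, ?_, funext fun k => ?_⟩
  · rw [← List.sortedLE_ofFn_iff, hf]
    exact (Multiset.pairwise_sort _ _).sortedLE
  · rw [hist_eq_count_ofFn, hf, ← Multiset.coe_count, Multiset.sort_eq]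
    simp [Multiset.count_sum', Multiset.count_replicate]

end hist

lemma Nat.cast_multinomial_eq_div {K ι : Type*} [Field K] [CharZero K] (s : Finset ι)
    (c : ι → ℕ) :
    (Nat.multinomial s c : K) =
      ((∑ i ∈ s, c i).factorial : K) / ∏ i ∈ s, ((c i).factorial : K) := by
  rw [eq_div_iff (prod_ne_zero_iff.2 fun i _ => Nat.cast_ne_zero.2 (Nat.factorial_ne_zero _)),
    mul_comm]
  exact_mod_cast Nat.multinomial_spec s c

lemma spow_mul_spow {d p : ℕ} (q k : Fin d → ℝ) (i : {f : Fin p → Fin d // Monotone f}) :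
    spow p q i * spow p k i =
      Nat.multinomial univ (hist i.1) * ∏ a, (q a * k a) ^ hist i.1 a := by
  have hcoef : (0 : ℝ) ≤ p.factorial / ∏ a, ((hist i.1 a).factorial : ℝ) := by positivity
  rw [spow, spow, mul_mul_mul_comm, Real.mul_self_sqrt hcoef, Nat.cast_multinomial_eq_div, sum_hist,
    prod_comp_eq_prod_pow_hist q, prod_comp_eq_prod_pow_hist k, ← prod_mul_distrib]
  simp only [mul_pow]

theorem spow_inner_product_general (d p : ℕ) (q k : Fin d → ℝ) :
    ∑ i : {f : Fin p → Fin d // Monotone f}, spow p q i * spow p k i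
      = (∑ a, q a * k a) ^ p := by
  rw [sum_pow_eq_sum_piAntidiag]
  refine sum_bij (fun i _ => hist i.1) (fun i _ => mem_piAntidiag.2 ⟨sum_hist i.1, by simp⟩)
    (fun i _ j _ h => Subtype.ext (i.2.eq_of_hist_eq j.2 h)) (fun c hc => ?_)
    (fun i _ => spow_mul_spow q k i)
  obtain ⟨f, hf, rfl⟩ := exists_monotone_hist_eq c (mem_piAntidiag.1 hc).1
  exact ⟨⟨f, hf⟩, mem_univ _, rfl⟩

/-- For all d ≥ 1, p ≥ 1 and q, k ∈ ℝ^d,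
⟨spow_p(q), spow_p(k)⟩ = (⟨q,k⟩)^p. -/
theorem spow_inner_product (d p : ℕ) (hd : 1 ≤ d) (hp : 1 ≤ p) (q k : Fin d → ℝ) :
    ∑ i : {f : Fin p → Fin d // Monotone f}, spow p q i * spow p k i
      = (∑ a, q a * k a) ^ p :=
  spow_inner_product_general d p q k
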